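/- (Leaf occurrences.) (1) For any T-term P, the evaluation tree se(P) contains the leaf T but not the leaf F. (2) For any F-term P, se(P) contains the leaf F but not the leaf T. (3) For any *-term P, se(P) contains both the leaf T and the leaf F. -/

import Mathlib

/-- Evaluation trees over a set `A` of atoms, with leaves `T` and `F`. -/
inductive ETree (A : Type) : Type
  | leafT : ETree A
  | leafF : ETree A
  | node : ETree A → A → ETree A → ETree A

namespace ETree

/-- Leaf replacement `X[T↦Y, F↦Z]`. -/
def repl {A : Type} : ETree A → ETree A → ETree A → ETree A
  | leafT, y, _ => y
  | leafF, _, z => z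
  | node l a r, y, z => node (repl l y z) a (repl r y z)

end ETree

namespace ETree

/-- The tree contains the leaf `T`. -/
def hasT {A : Type} : ETree A → Prop
  | leafT => True
  | leafF => False
  | node l _ r => hasT l ∨ hasT r

/-- The tree contains the leaf `F`. -/
def hasF {A : Type} : ETree A → Prop
  | leafT => False
  | leafF => True
  | node l _ r => hasF l ∨ hasF r

end ETree

/-- Closed sequential propositional statements over `A`:
`P ::= a | T | F | ¬P | P ∧❛ P | P ∨❛ P`. -/
inductive STerm (A : Type) : Type
  | atom : A → STerm A
  | tt : STerm A
  | ff : STerm A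
  | neg : STerm A → STerm A
  | and : STerm A → STerm A → STerm A
  | or : STerm A → STerm A → STerm A

/-- The short-circuit evaluation function `se : S_A → T_A`. -/
def se {A : Type} : STerm A → ETree A
  | .tt => .leafT
  | .ff => .leafF
  | .atom a => .node .leafT a .leafF
  | .neg P => (se P).repl .leafF .leafT
  | .and P Q => (se P).repl (se Q) .leafF
  | .or P Q => (se P).repl .leafT (se Q)

/-- T-terms: `P^T ::= T | (a ∧❛ P^T) ∨❛ P^T`. -/
inductive IsTTerm {A : Type} : STerm A → Prop
  | tt : IsTTerm .tt
  | node (a : A) {P Q} : IsTTerm P → IsTTerm Q → IsTTerm (.or (.and (.atom a) P) Q)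

/-- F-terms: `P^F ::= F | (a ∨❛ P^F) ∧❛ P^F`. -/
inductive IsFTerm {A : Type} : STerm A → Prop
  | ff : IsFTerm .ff
  | node (a : A) {P Q} : IsFTerm P → IsFTerm Q → IsFTerm (.and (.or (.atom a) P) Q)

/-- ℓ-terms: `P^ℓ ::= (a ∧❛ P^T) ∨❛ P^F | (¬a ∧❛ P^T) ∨❛ P^F`. -/
inductive IsLTerm {A : Type} : STerm A → Prop
  | pos (a : A) {P Q} : IsTTerm P → IsFTerm Q → IsLTerm (.or (.and (.atom a) P) Q)
  | neg (a : A) {P Q} : IsTTerm P → IsFTerm Q → IsLTerm (.or (.and (.neg (.atom a)) P) Q)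

mutual
/-- The category `P^c ::= P^ℓ | P^* ∧❛ P^d`. -/
inductive IsCTerm {A : Type} : STerm A → Prop
  | ell {P} : IsLTerm P → IsCTerm P
  | and {P Q} : IsStarTerm P → IsDTerm Q → IsCTerm (.and P Q)

/-- The category `P^d ::= P^ℓ | P^* ∨❛ P^c`. -/
inductive IsDTerm {A : Type} : STerm A → Prop
  | ell {P} : IsLTerm P → IsDTerm P
  | or {P Q} : IsStarTerm P → IsCTerm Q → IsDTerm (.or P Q)

/-- *-terms: `P^* ::= P^c | P^d`. -/
inductive IsStarTerm {A : Type} : STerm A → Prop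
  | c {P} : IsCTerm P → IsStarTerm P
  | d {P} : IsDTerm P → IsStarTerm P
end

/-! Whether `se P` contains the leaf `T` or `F` depends only on which leaves the trees of the
immediate subterms contain, since `X[T↦Y, F↦Z]` contains the leaves of `Y` exactly when `X`
contains `T` and those of `Z` exactly when `X` contains `F`. Each clause then follows by induction
on the grammar. -/

namespace ETree

variable {A : Type}

@[simp]
theorem hasT_repl (x y z : ETree A) :
    (x.repl y z).hasT ↔ x.hasT ∧ y.hasT ∨ x.hasF ∧ z.hasT := by
  induction x with
  | leafT | leafF => simp [repl, hasT, hasF]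
  | node l a r ihl ihr => simp only [repl, hasT, hasF, ihl, ihr]; tauto

@[simp]
theorem hasF_repl (x y z : ETree A) :
    (x.repl y z).hasF ↔ x.hasT ∧ y.hasF ∨ x.hasF ∧ z.hasF := by
  induction x with
  | leafT | leafF => simp [repl, hasT, hasF]
  | node l a r ihl ihr => simp only [repl, hasT, hasF, ihl, ihr]; tauto

end ETree

section LeafCalculus

variable {A : Type} (P Q : STerm A) (a : A)

@[simp] theorem hasT_se_tt : (se (.tt : STerm A)).hasT := trivial

@[simp] theorem not_hasF_se_tt : ¬(se (.tt : STerm A)).hasF := id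

@[simp] theorem not_hasT_se_ff : ¬(se (.ff : STerm A)).hasT := id

@[simp] theorem hasF_se_ff : (se (.ff : STerm A)).hasF := trivial

@[simp] theorem hasT_se_atom : (se (.atom a)).hasT := Or.inl trivial

@[simp] theorem hasF_se_atom : (se (.atom a)).hasF := Or.inr trivial

@[simp]
theorem hasT_se_neg : (se (.neg P)).hasT ↔ (se P).hasF := by
  simp [se, ETree.hasT]

@[simp]
theorem hasF_se_neg : (se (.neg P)).hasF ↔ (se P).hasT := by
  simp [se, ETree.hasF]

@[simp]
theorem hasT_se_and : (se (.and P Q)).hasT ↔ (se P).hasT ∧ (se Q).hasT := by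
  simp [se, ETree.hasT]

@[simp]
theorem hasF_se_and : (se (.and P Q)).hasF ↔ (se P).hasT ∧ (se Q).hasF ∨ (se P).hasF := by
  simp [se, ETree.hasF]

@[simp]
theorem hasT_se_or : (se (.or P Q)).hasT ↔ (se P).hasT ∨ (se P).hasF ∧ (se Q).hasT := by
  simp [se, ETree.hasT]

@[simp]
theorem hasF_se_or : (se (.or P Q)).hasF ↔ (se P).hasF ∧ (se Q).hasF := by
  simp [se, ETree.hasF]

end LeafCalculus

variable {A : Type} {P Q : STerm A}

theorem IsTTerm.hasT_and_not_hasF_se (h : IsTTerm P) : (se P).hasT ∧ ¬(se P).hasF := by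
  induction h with
  | tt => simp
  | node a _ _ ihP ihQ => simp [ihP.1, ihQ.2]

theorem IsFTerm.hasF_and_not_hasT_se (h : IsFTerm P) : (se P).hasF ∧ ¬(se P).hasT := by
  induction h with
  | ff => simp
  | node a _ _ ihP ihQ => simp [ihP.1, ihQ.2]

theorem IsLTerm.hasT_and_hasF_se (h : IsLTerm P) : (se P).hasT ∧ (se P).hasF := by
  cases h with
  | pos a hP hQ | neg a hP hQ =>
    simp [hP.hasT_and_not_hasF_se.1, hQ.hasF_and_not_hasT_se.1]

theorem hasT_and_hasF_se_and (hP : (se P).hasT ∧ (se P).hasF) (hQ : (se Q).hasT) :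
    (se (.and P Q)).hasT ∧ (se (.and P Q)).hasF := by
  simp [hP.1, hP.2, hQ]

theorem hasT_and_hasF_se_or (hP : (se P).hasT ∧ (se P).hasF) (hQ : (se Q).hasF) :
    (se (.or P Q)).hasT ∧ (se (.or P Q)).hasF := by
  simp [hP.1, hP.2, hQ]

mutual

theorem IsCTerm.hasT_and_hasF_se {P : STerm A} : IsCTerm P → (se P).hasT ∧ (se P).hasF
  | .ell h => h.hasT_and_hasF_se
  | .and hP hQ => hasT_and_hasF_se_and hP.hasT_and_hasF_se hQ.hasT_and_hasF_se.1

theorem IsDTerm.hasT_and_hasF_se {P : STerm A} : IsDTerm P → (se P).hasT ∧ (se P).hasF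
  | .ell h => h.hasT_and_hasF_se
  | .or hP hQ => hasT_and_hasF_se_or hP.hasT_and_hasF_se hQ.hasT_and_hasF_se.2

theorem IsStarTerm.hasT_and_hasF_se {P : STerm A} : IsStarTerm P → (se P).hasT ∧ (se P).hasF
  | .c h => h.hasT_and_hasF_se
  | .d h => h.hasT_and_hasF_se

end

/-- Leaf occurrences: `se` of a T-term contains `T` but not `F`; of an F-term contains
`F` but not `T`; of a *-term contains both `T` and `F`. -/
theorem leaf_occurrences {A : Type} [Nonempty A] :
    (∀ P : STerm A, IsTTerm P → (se P).hasT ∧ ¬ (se P).hasF) ∧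
    (∀ P : STerm A, IsFTerm P → (se P).hasF ∧ ¬ (se P).hasT) ∧
    (∀ P : STerm A, IsStarTerm P → (se P).hasT ∧ (se P).hasF) :=
  ⟨fun _ h => h.hasT_and_not_hasF_se, fun _ h => h.hasF_and_not_hasT_se,
    fun _ h => h.hasT_and_hasF_se⟩
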